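/- Let a < b be reals, let f_d, f : [a, b] → ℝ with f continuous and strictly decreasing, f(a) > α > f(b) for some level α, and suppose f_d → f uniformly on [a, b]. Define τ_d = inf{t ∈ [a,b] : f_d(t) < α} and τ = inf{t ∈ [a,b] : f(t) < α} (with inf ∅ interpreted as b). Then τ_d → τ as d → ∞. -/
import Mathlib


open Filter Set

/-- Convergence of hitting times of a level under uniform convergence: if
`f_d → f` uniformly on `[a,b]`, `f` is continuous and strictly decreasing with
`f(a) > α > f(b)`, then the first times `f_d` (resp. `f`) drops below `α`
(with `inf ∅ = b`) converge. -/
theorem hitting_time_convergence (a b α : ℝ) (hab : a < b)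
    (f : ℝ → ℝ) (fd : ℕ → ℝ → ℝ)
    (hcont : ContinuousOn f (Set.Icc a b))
    (hanti : StrictAntiOn f (Set.Icc a b))
    (hfa : α < f a) (hfb : f b < α)
    (hunif : TendstoUniformlyOn fd f atTop (Set.Icc a b)) :
    Tendsto
      (fun d => sInf ({t | t ∈ Set.Icc a b ∧ fd d t < α} ∪ {b}))
      atTop (nhds (sInf ({t | t ∈ Set.Icc a b ∧ f t < α} ∪ {b}))) := by
  obtain ⟨t₀, ht₀mem, ht₀⟩ : ∃ t₀ ∈ Set.Icc a b, f t₀ = α :=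
    intermediate_value_Icc' hab.le hcont ⟨hfb.le, hfa.le⟩
  have ha0 : a < t₀ := by
    rcases lt_or_eq_of_le ht₀mem.1 with h | h
    · exact h
    · exact absurd (h ▸ ht₀) (by intro hh; rw [← hh] at hfa; exact lt_irrefl _ hfa)
  have hb0 : t₀ < b := by
    rcases lt_or_eq_of_le ht₀mem.2 with h | h
    · exact h
    · exact absurd (h ▸ ht₀) (by intro hh; rw [hh] at hfb; exact lt_irrefl _ hfb)
  -- identify the limit
  have hset : ({t | t ∈ Set.Icc a b ∧ f t < α} ∪ {b} : Set ℝ) = Set.Ioc t₀ b := by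
    ext t
    constructor
    · rintro (⟨htm, hft⟩ | ht)
      · refine ⟨?_, htm.2⟩
        by_contra h
        push_neg at h
        rcases lt_or_eq_of_le h with h' | h'
        · have := hanti htm ht₀mem h'
          rw [ht₀] at this
          linarith
        · rw [h', ht₀] at hft; linarith
      · simp only [Set.mem_singleton_iff] at ht
        rw [ht]
        exact ⟨hb0, le_refl b⟩
    · rintro ⟨h1, h2⟩
      left
      refine ⟨⟨le_of_lt (lt_of_lt_of_le ha0 h1.le), h2⟩, ?_⟩
      have := hanti ht₀mem ⟨le_of_lt (lt_of_lt_of_le ha0 h1.le), h2⟩ h1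
      rw [ht₀] at this
      exact this
  rw [hset, csInf_Ioc hb0]
  rw [Metric.tendsto_nhds]
  intro ε hε
  set ε₁ : ℝ := min (ε / 2) (min (t₀ - a) (b - t₀)) with hε₁def
  have hε₁ : 0 < ε₁ := lt_min (by linarith) (lt_min (by linarith) (by linarith))
  have h1 : a ≤ t₀ - ε₁ := by
    have : ε₁ ≤ t₀ - a := le_trans (min_le_right _ _) (min_le_left _ _)
    linarith
  have h2 : t₀ + ε₁ ≤ b := by
    have : ε₁ ≤ b - t₀ := le_trans (min_le_right _ _) (min_le_right _ _)
    linarith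
  have hεhalf : ε₁ ≤ ε / 2 := min_le_left _ _
  have hmemp : t₀ + ε₁ ∈ Set.Icc a b := ⟨by linarith [ht₀mem.1], h2⟩
  have hmemm : t₀ - ε₁ ∈ Set.Icc a b := ⟨h1, by linarith [ht₀mem.2]⟩
  have hfp : f (t₀ + ε₁) < α := by
    have := hanti ht₀mem hmemp (by linarith)
    rw [ht₀] at this; exact this
  have hfm : α < f (t₀ - ε₁) := by
    have := hanti hmemm ht₀mem (by linarith)
    rw [ht₀] at this; exact this
  set δ : ℝ := min (α - f (t₀ + ε₁)) (f (t₀ - ε₁) - α) with hδdef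
  have hδ : 0 < δ := lt_min (by linarith) (by linarith)
  filter_upwards [Metric.tendstoUniformlyOn_iff.1 hunif δ hδ] with d hd
  have hb_mem : b ∈ ({t | t ∈ Set.Icc a b ∧ fd d t < α} ∪ {b} : Set ℝ) := Or.inr rfl
  have lb : ∀ t ∈ ({t | t ∈ Set.Icc a b ∧ fd d t < α} ∪ {b} : Set ℝ), t₀ - ε₁ ≤ t := by
    rintro t (⟨htm, hft⟩ | ht)
    · by_contra h
      push_neg at h
      have hlt := hanti htm hmemm h
      have hdist := hd t htm
      rw [Real.dist_eq, abs_lt] at hdist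
      have : δ ≤ f (t₀ - ε₁) - α := min_le_right _ _
      linarith
    · simp only [Set.mem_singleton_iff] at ht
      subst ht; linarith
  have hbdd : BddBelow ({t | t ∈ Set.Icc a b ∧ fd d t < α} ∪ {b} : Set ℝ) := ⟨t₀ - ε₁, lb⟩
  have hub : sInf ({t | t ∈ Set.Icc a b ∧ fd d t < α} ∪ {b} : Set ℝ) ≤ t₀ + ε₁ := by
    apply csInf_le hbdd
    left
    refine ⟨hmemp, ?_⟩
    have hdist := hd (t₀ + ε₁) hmemp
    rw [Real.dist_eq, abs_lt] at hdist
    have : δ ≤ α - f (t₀ + ε₁) := min_le_left _ _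
    linarith
  have hlb : t₀ - ε₁ ≤ sInf ({t | t ∈ Set.Icc a b ∧ fd d t < α} ∪ {b} : Set ℝ) :=
    le_csInf ⟨b, hb_mem⟩ lb
  rw [Real.dist_eq, abs_lt]
  constructor <;> linarith
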